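/- arXiv:1108.2714 — 3 statements merged into one kernel-verified Lean document; each statement's English description precedes it below -/
import Mathlib

section
/- Let p ≥ 1 and k ≥ 1 be integers, and let Q be an integer polynomial in m variables that is an integer linear combination of the polynomials (x_1 - a_1)^{i_1}···(x_m - a_m)^{i_m}·N^ℓ over tuples with i_1 + ··· + i_m + ℓ ≥ k, where p divides N. If r_1,...,r_m are integers with a_i ≡ r_i (mod p) for all i, and |Q(r_1,...,r_m)| < p^k, then Q(r_1,...,r_m) = 0. -/
open MvPolynomial

section

variable {σ R : Type*} [Fintype σ] [CommRing R]

def shiftedMonomialsMulPow (a : σ → R) (N : R) (k : ℕ) : Set (MvPolynomial σ R) :=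
  {P | ∃ (e : σ → ℕ) (ℓ : ℕ), k ≤ (∑ i, e i) + ℓ ∧
    P = (∏ i, (X i - C (a i)) ^ e i) * C N ^ ℓ}

theorem pow_dvd_eval_of_mem_shiftedMonomialsMulPow {p N : R} {k : ℕ} {a r : σ → R}
    (hpN : p ∣ N) (hdiff : ∀ i, p ∣ r i - a i) {P : MvPolynomial σ R}
    (hP : P ∈ shiftedMonomialsMulPow a N k) : p ^ k ∣ eval r P := by
  obtain ⟨e, ℓ, hkle, rfl⟩ := hP
  simp only [map_mul, map_prod, map_pow, map_sub, eval_X, eval_C]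
  have hprod : p ^ (∑ i, e i) ∣ ∏ i, (r i - a i) ^ e i := by
    rw [← Finset.prod_pow_eq_pow_sum]
    exact Finset.prod_dvd_prod_of_dvd _ _ fun i _ => pow_dvd_pow_of_dvd (hdiff i) _
  calc p ^ k ∣ p ^ ((∑ i, e i) + ℓ) := pow_dvd_pow _ hkle
    _ = p ^ (∑ i, e i) * p ^ ℓ := pow_add _ _ _
    _ ∣ (∏ i, (r i - a i) ^ e i) * N ^ ℓ := mul_dvd_mul hprod (pow_dvd_pow_of_dvd hpN _)

theorem pow_dvd_eval_of_mem_span_shiftedMonomialsMulPow {p N : R} {k : ℕ} {a r : σ → R}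
    (hpN : p ∣ N) (hdiff : ∀ i, p ∣ r i - a i) {Q : MvPolynomial σ R}
    (hQ : Q ∈ Submodule.span ℤ (shiftedMonomialsMulPow a N k)) : p ^ k ∣ eval r Q := by
  induction hQ using Submodule.span_induction with
  | mem P hP => exact pow_dvd_eval_of_mem_shiftedMonomialsMulPow hpN hdiff hP
  | zero => simp
  | add P P' _ _ hP hP' => simpa only [map_add] using dvd_add hP hP'
  | smul n P _ hP => rw [map_zsmul, zsmul_eq_mul]; exact hP.mul_left _

end

theorem stmt2_general (m : ℕ) (p N : ℤ) (k : ℕ) (hpN : p ∣ N)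
    (a r : Fin m → ℤ) (hcong : ∀ i, a i ≡ r i [ZMOD p])
    (Q : MvPolynomial (Fin m) ℤ)
    (hQ : Q ∈ Submodule.span ℤ
      {P : MvPolynomial (Fin m) ℤ | ∃ (e : Fin m → ℕ) (ℓ : ℕ),
        k ≤ (∑ i, e i) + ℓ ∧
        P = (∏ i, (MvPolynomial.X i - MvPolynomial.C (a i)) ^ e i) *
              MvPolynomial.C N ^ ℓ})
    (hsmall : |MvPolynomial.eval r Q| < p ^ k) :
    MvPolynomial.eval r Q = 0 :=
  Int.eq_zero_of_abs_lt_dvd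
    (pow_dvd_eval_of_mem_span_shiftedMonomialsMulPow hpN (fun i => (hcong i).dvd) hQ) hsmall

/-- If `Q` is an integer linear combination of the polynomials
`(x_1-a_1)^{i_1}···(x_m-a_m)^{i_m}·N^ℓ` over tuples with `i_1+···+i_m+ℓ ≥ k`,
`p ∣ N`, `a_i ≡ r_i (mod p)` for all `i`, and `|Q(r)| < p^k`, then `Q(r) = 0`. -/
theorem stmt2 (m : ℕ) (p N : ℤ) (k : ℕ) (hp : 0 < p) (hk : 0 < k) (hpN : p ∣ N)
    (a r : Fin m → ℤ) (hcong : ∀ i, a i ≡ r i [ZMOD p])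
    (Q : MvPolynomial (Fin m) ℤ)
    (hQ : Q ∈ Submodule.span ℤ
      {P : MvPolynomial (Fin m) ℤ | ∃ (e : Fin m → ℕ) (ℓ : ℕ),
        k ≤ (∑ i, e i) + ℓ ∧
        P = (∏ i, (MvPolynomial.X i - MvPolynomial.C (a i)) ^ e i) *
              MvPolynomial.C N ^ ℓ})
    (hsmall : |MvPolynomial.eval r Q| < p ^ k) :
    MvPolynomial.eval r Q = 0 :=
  stmt2_general m p N k hpN a r hcong Q hQ hsmall
end

section
/- For nonnegative integers t and m, the sum over all tuples (i_1,...,i_m) of nonnegative integers with i_1 + ··· + i_m ≤ t of i_1 + ··· + i_m equals C(t+m, m)·t·m/(m+1). -/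
/-! Grouping the tuples by their sum `s`, level `s` contributes `s` times the number
`multichoose m s` of its tuples. The resulting sum is evaluated by induction on `t`, using the
absorption identity `(t + 1) * C(m + t, t + 1) = m * C(m + t, t)`. -/

open Finset

namespace Finset.Nat

theorem card_antidiagonalTuple (k n : ℕ) : #(antidiagonalTuple k n) = k.multichoose n := by
  have h := card_finsuppAntidiag_nat_eq_multichoose (s := (univ : Finset (Fin k))) n
  rw [card_univ, Fintype.card_fin] at h
  rw [← h]
  refine card_nbij' Finsupp.equivFunOnFinite.symm Finsupp.equivFunOnFinite ?_ ?_ ?_ ?_ <;>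
    intro x hx <;> simp_all [mem_antidiagonalTuple]

theorem sum_sum_antidiagonalTuple (k n : ℕ) :
    ∑ x ∈ antidiagonalTuple k n, ∑ i, x i = n * k.multichoose n := by
  rw [sum_congr rfl fun x hx => mem_antidiagonalTuple.mp hx, sum_const, smul_eq_mul,
    card_antidiagonalTuple, mul_comm]

theorem pairwiseDisjoint_antidiagonalTuple (k : ℕ) (s : Set ℕ) :
    s.PairwiseDisjoint (antidiagonalTuple k) := fun _ _ _ _ hab =>
  disjoint_left.mpr fun _ ha hb =>
    hab ((mem_antidiagonalTuple.mp ha).symm.trans (mem_antidiagonalTuple.mp hb))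

end Finset.Nat

theorem Nat.succ_mul_sum_range_mul_multichoose (m t : ℕ) :
    (m + 1) * ∑ s ∈ range (t + 1), s * m.multichoose s = (t + m).choose m * t * m := by
  induction t with
  | zero => simp
  | succ t ih =>
    have h_absorb : m.multichoose (t + 1) * (t + 1) = (t + m).choose m * m := by
      rw [Nat.multichoose_eq, show m + (t + 1) - 1 = t + m by omega, Nat.choose_succ_right_eq,
        Nat.choose_symm_add, Nat.add_sub_cancel_left]
    have h_succ : (t + m).choose m * (t + m + 1) = (t + 1 + m).choose m * (t + 1) := by
      rw [Nat.choose_mul_succ_eq, show t + m + 1 - m = t + 1 by omega, Nat.add_right_comm]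
    rw [sum_range_succ, mul_add, ih]
    calc (t + m).choose m * t * m + (m + 1) * ((t + 1) * m.multichoose (t + 1))
        = (t + m).choose m * (t + m + 1) * m := by rw [mul_comm (t + 1), h_absorb]; ring
      _ = _ := by rw [h_succ]

/-- For nonnegative integers `t` and `m`, the sum over tuples
`(i_1,...,i_m)` of nonnegative integers with `i_1+···+i_m ≤ t` of
`i_1+···+i_m` equals `C(t+m,m)·t·m/(m+1)`. -/
theorem stmt5 (t m : ℕ) :
    (m + 1) * ∑ x ∈ (Finset.range (t + 1)).biUnion
        (fun s => Finset.Nat.antidiagonalTuple m s), (∑ i, x i)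
      = (t + m).choose m * t * m := by
  rw [sum_biUnion (Nat.pairwiseDisjoint_antidiagonalTuple m _)]
  simp only [Nat.sum_sum_antidiagonalTuple]
  exact Nat.succ_mul_sum_range_mul_multichoose m t
end

section
/- Let F be a field, let p(z) ∈ F[z] divide N(z) with deg p ≥ β·deg N, and let g_1,...,g_m ∈ F[z] satisfy p | (f_i - g_i) for all i. Suppose Q(x_1,...,x_m) ∈ F[z][x_1,...,x_m] is an F[z]-linear combination of the polynomials (x_1 - f_1)^{i_1}···(x_m - f_m)^{i_m}·N^ℓ over tuples with i_1 + ··· + i_m + ℓ ≥ k. If deg_z Q(g_1(z),...,g_m(z)) < β·k·deg N, then Q(g_1(z),...,g_m(z)) = 0. -/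
/-!
Since `g i ≡ f i` modulo `p` and `p ∣ N`, each generator
`∏ (X i - f i) ^ e i * N ^ ℓ` evaluates at `g` to a multiple of `p ^ (∑ e i + ℓ)`, hence
`p ^ k ∣ Q(g)`. A nonzero multiple of `p ^ k` has degree at least `k · deg p ≥ β k deg N`.
-/

open Polynomial

section DivisibilityOfEvaluation

variable {R σ : Type*} [CommRing R] [Fintype σ] {f g : σ → R} {p N : R}

theorem pow_dvd_eval_prod_X_sub_C_pow_mul_C_pow (hpN : p ∣ N) (hfg : ∀ i, p ∣ f i - g i)
    (e : σ → ℕ) (ℓ : ℕ) :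
    p ^ (∑ i, e i + ℓ) ∣ MvPolynomial.eval g
      ((∏ i, (MvPolynomial.X i - MvPolynomial.C (f i)) ^ e i) * MvPolynomial.C N ^ ℓ) := by
  simp only [map_mul, map_pow, map_prod, map_sub, MvPolynomial.eval_X, MvPolynomial.eval_C]
  rw [pow_add, ← Finset.prod_pow_eq_pow_sum]
  exact mul_dvd_mul (Finset.prod_dvd_prod_of_dvd _ _ fun i _ => pow_dvd_pow_of_dvd (dvd_sub_comm.mp (hfg i)) _)
    (pow_dvd_pow_of_dvd hpN ℓ)

theorem pow_dvd_eval_of_mem_span (k : ℕ) (hpN : p ∣ N) (hfg : ∀ i, p ∣ f i - g i)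
    {Q : MvPolynomial σ R}
    (hQ : Q ∈ Submodule.span R
      {P : MvPolynomial σ R | ∃ (e : σ → ℕ) (ℓ : ℕ), k ≤ (∑ i, e i) + ℓ ∧
        P = (∏ i, (MvPolynomial.X i - MvPolynomial.C (f i)) ^ e i) * MvPolynomial.C N ^ ℓ}) :
    p ^ k ∣ MvPolynomial.eval g Q := by
  rw [← Ideal.mem_span_singleton, ← MvPolynomial.coe_aeval_eq_eval]
  refine (Submodule.span_le
    (p := Submodule.comap (MvPolynomial.aeval g).toLinearMap (Ideal.span {p ^ k}))).mpr ?_ hQ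
  rintro _ ⟨e, ℓ, hk, rfl⟩
  exact Ideal.mem_span_singleton.mpr <|
    (pow_dvd_pow p hk).trans (pow_dvd_eval_prod_X_sub_C_pow_mul_C_pow hpN hfg e ℓ)

end DivisibilityOfEvaluation

theorem stmt9_general (F : Type*) [Field F] (m k : ℕ) (β : ℚ)
    (N p : Polynomial F) (hpN : p ∣ N)
    (hpdeg : β * N.natDegree ≤ (p.natDegree : ℚ))
    (f g : Fin m → Polynomial F) (hdiv : ∀ i, p ∣ (f i - g i))
    (Q : MvPolynomial (Fin m) (Polynomial F))
    (hQ : Q ∈ Submodule.span (Polynomial F)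
      {P : MvPolynomial (Fin m) (Polynomial F) | ∃ (e : Fin m → ℕ) (ℓ : ℕ),
        k ≤ (∑ i, e i) + ℓ ∧
        P = (∏ i, (MvPolynomial.X i - MvPolynomial.C (f i)) ^ e i) *
              MvPolynomial.C N ^ ℓ})
    (hdeg : ((MvPolynomial.eval g Q).natDegree : ℚ) < β * k * N.natDegree) :
    MvPolynomial.eval g Q = 0 := by
  refine eq_zero_of_dvd_of_natDegree_lt (pow_dvd_eval_of_mem_span k hpN hdiv hQ) ?_
  have hbound : β * k * N.natDegree ≤ ((k * p.natDegree : ℕ) : ℚ) := by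
    push_cast
    nlinarith [(Nat.cast_nonneg k : (0 : ℚ) ≤ k)]
  rw [natDegree_pow]
  exact_mod_cast hdeg.trans_le hbound

/-- If `p ∣ N` with `deg p ≥ β·deg N`, `p ∣ (f_i - g_i)` for all
`i`, and `Q` is an `F[z]`-linear combination of
`(x_1-f_1)^{i_1}···(x_m-f_m)^{i_m}·N^ℓ` over tuples with `i_1+···+i_m+ℓ ≥ k`,
then `deg_z Q(g_1,...,g_m) < β·k·deg N` implies `Q(g_1,...,g_m) = 0`. -/
theorem stmt9 (F : Type*) [Field F] (m k : ℕ) (hk : 0 < k) (β : ℚ) (hβ : 0 < β)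
    (N p : Polynomial F) (hN : N ≠ 0) (hpN : p ∣ N)
    (hpdeg : β * N.natDegree ≤ (p.natDegree : ℚ))
    (f g : Fin m → Polynomial F) (hdiv : ∀ i, p ∣ (f i - g i))
    (Q : MvPolynomial (Fin m) (Polynomial F))
    (hQ : Q ∈ Submodule.span (Polynomial F)
      {P : MvPolynomial (Fin m) (Polynomial F) | ∃ (e : Fin m → ℕ) (ℓ : ℕ),
        k ≤ (∑ i, e i) + ℓ ∧
        P = (∏ i, (MvPolynomial.X i - MvPolynomial.C (f i)) ^ e i) *
              MvPolynomial.C N ^ ℓ})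
    (hdeg : ((MvPolynomial.eval g Q).natDegree : ℚ) < β * k * N.natDegree) :
    MvPolynomial.eval g Q = 0 :=
  stmt9_general F m k β N p hpN hpdeg f g hdiv Q hQ hdeg
end
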